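/- arXiv:2402.05806 — 6 statements merged into one kernel-verified Lean document; each statement's English description precedes it below -/
import Mathlib

section
/- Let $\mathbf{z} \in \mathbb{R}^C$ with $z_1 \geq z_2 \geq \dots \geq z_C$, let $L \in \{1,\dots,C\}$, and for $T>0$ define the softmax $\sigma_i(\mathbf{z}/T) = \exp(z_i/T)/\sum_{j=1}^C \exp(z_j/T)$. If $T > \tilde T > 0$, then $\sum_{j=1}^L \sigma_j(\mathbf{z}/\tilde T) \geq \sum_{j=1}^L \sigma_j(\mathbf{z}/T)$. -/
/-!
Split the classes into the top `L` and the rest, with exponential masses `A(t)` and `B(t)` at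
temperature `t`; the top-`L` mass is `A/(A+B)`, and `A(T)/(A(T)+B(T)) ≤ A(T')/(A(T')+B(T'))`
amounts to `A(T) B(T') ≤ A(T') B(T)`. Expanding both products, this holds term by term:
for `z j ≤ z i` and `T' ≤ T`, `exp (z i/T + z j/T') ≤ exp (z i/T' + z j/T)` because
`(z i - z j) (1/T' - 1/T) ≥ 0`.
-/

noncomputable def softmax {C : ℕ} (z : Fin C → ℝ) (T : ℝ) (i : Fin C) : ℝ :=
  Real.exp (z i / T) / ∑ j, Real.exp (z j / T)

noncomputable def topSum {C : ℕ} (z : Fin C → ℝ) (T : ℝ) (L : ℕ) : ℝ :=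
  ∑ i ∈ Finset.univ.filter (fun i : Fin C => (i : ℕ) < L), softmax z T i

open Finset Real

lemma exp_div_mul_exp_div_le {a b t t' : ℝ} (hba : b ≤ a) (ht' : 0 < t') (ht't : t' ≤ t) :
    exp (a / t) * exp (b / t') ≤ exp (a / t') * exp (b / t) := by
  rw [← exp_add, ← exp_add, exp_le_exp]
  have hinv : 1 / t ≤ 1 / t' := one_div_le_one_div_of_le ht' ht't
  have key : 0 ≤ (a - b) * (1 / t' - 1 / t) := mul_nonneg (sub_nonneg.2 hba) (sub_nonneg.2 hinv)
  calc a / t + b / t' = a / t' + b / t - (a - b) * (1 / t' - 1 / t) := by ring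
    _ ≤ a / t' + b / t := by linarith

lemma div_add_le_div_add {a b a' b' : ℝ} (hab : 0 < a + b) (hab' : 0 < a' + b')
    (h : a * b' ≤ a' * b) : a / (a + b) ≤ a' / (a' + b') := by
  rw [div_le_div_iff₀ hab hab']
  linarith

lemma sum_softmax_eq {C : ℕ} (z : Fin C → ℝ) (t : ℝ) (s : Finset (Fin C)) :
    ∑ i ∈ s, softmax z t i = (∑ i ∈ s, exp (z i / t)) /
      ((∑ i ∈ s, exp (z i / t)) + ∑ i ∈ sᶜ, exp (z i / t)) := by
  rw [sum_add_sum_compl, sum_div]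
  rfl

theorem sum_softmax_le_of_le {C : ℕ} (z : Fin C → ℝ) (s : Finset (Fin C))
    (hs : ∀ i ∈ s, ∀ j ∉ s, z j ≤ z i) {t t' : ℝ} (ht' : 0 < t') (ht't : t' ≤ t) :
    ∑ i ∈ s, softmax z t i ≤ ∑ i ∈ s, softmax z t' i := by
  rcases s.eq_empty_or_nonempty with rfl | ⟨i₀, hi₀⟩
  · simp
  have hpos : ∀ u : ℝ, 0 < (∑ i ∈ s, exp (z i / u)) + ∑ i ∈ sᶜ, exp (z i / u) := fun u =>
    add_pos_of_pos_of_nonneg (sum_pos (fun i _ => exp_pos _) ⟨i₀, hi₀⟩)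
      (sum_nonneg fun i _ => (exp_pos _).le)
  rw [sum_softmax_eq, sum_softmax_eq]
  refine div_add_le_div_add (hpos t) (hpos t') ?_
  rw [sum_mul_sum, sum_mul_sum]
  refine sum_le_sum fun i hi => sum_le_sum fun j hj => ?_
  exact exp_div_mul_exp_div_le (hs i hi j (mem_compl.1 hj)) ht' ht't

theorem stmt_1_general {C : ℕ} (z : Fin C → ℝ) (hz : ∀ i j : Fin C, i ≤ j → z j ≤ z i)
    (L : ℕ) (T T' : ℝ) (hTT : T > T') (hT' : T' > 0) :
    topSum z T' L ≥ topSum z T L := by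
  refine sum_softmax_le_of_le z _ (fun i hi j hj => hz i j ?_) hT' hTT.le
  simp only [mem_filter, mem_univ, true_and] at hi hj
  exact Fin.le_iff_val_le_val.2 (by omega)

theorem stmt_1 {C : ℕ} (z : Fin C → ℝ) (hz : ∀ i j : Fin C, i ≤ j → z j ≤ z i)
    (L : ℕ) (hL1 : 1 ≤ L) (hLC : L ≤ C) (T T' : ℝ) (hTT : T > T') (hT' : T' > 0) :
    topSum z T' L ≥ topSum z T L :=
  stmt_1_general z hz L T T' hTT hT'
end

section
/- For any $\mathbf{z} \in \mathbb{R}^C$ not proportional to the all-ones vector, the Shannon entropy $H(\sigma(\mathbf{z}/T)) = -\sum_{i=1}^C \sigma_i(\mathbf{z}/T)\ln \sigma_i(\mathbf{z}/T)$ is strictly monotonically increasing as a function of $T > 0$. -/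
noncomputable def entropy {C : ℕ} (p : Fin C → ℝ) : ℝ :=
  -∑ i, p i * Real.log (p i)

open Real Finset

lemma nonempty_of_not_exists_forall_eq {ι : Type*} {z : ι → ℝ} (hz : ¬ ∃ c, ∀ i, z i = c) :
    Nonempty ι := by
  obtain ⟨i, -⟩ := not_forall.mp (not_exists.mp hz 0)
  exact ⟨i⟩

lemma sq_sum_mul_lt_sum_mul_sum_mul_sq {ι : Type*} [Fintype ι] {w z : ι → ℝ} (hw : ∀ j, 0 < w j)
    (hz : ¬ ∃ c, ∀ i, z i = c) :
    (∑ j, w j * z j) ^ 2 < (∑ j, w j) * ∑ j, w j * z j ^ 2 := by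
  have := nonempty_of_not_exists_forall_eq hz
  have hW : 0 < ∑ j, w j := sum_pos (fun j _ ↦ hw j) univ_nonempty
  set m := (∑ j, w j * z j) / ∑ j, w j
  have hm : m * ∑ j, w j = ∑ j, w j * z j := div_mul_cancel₀ _ hW.ne'
  obtain ⟨i, hi⟩ := not_forall.mp (not_exists.mp hz m)
  have hspread : 0 < ∑ j, w j * (z j - m) ^ 2 :=
    sum_pos' (fun j _ ↦ by have := hw j; positivity)
      ⟨i, mem_univ _, by have := hw i; have := sub_ne_zero.mpr hi; positivity⟩
  have hexpand : ∑ j, w j * (z j - m) ^ 2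
      = ∑ j, w j * z j ^ 2 - 2 * m * ∑ j, w j * z j + m ^ 2 * ∑ j, w j := by
    simp only [mul_sum, ← sum_sub_distrib, ← sum_add_distrib]
    exact sum_congr rfl fun j _ ↦ by ring
  have hvar : (∑ j, w j) * ∑ j, w j * (z j - m) ^ 2
      = (∑ j, w j) * ∑ j, w j * z j ^ 2 - (∑ j, w j * z j) ^ 2 := by
    rw [hexpand]
    linear_combination (m * ∑ j, w j - ∑ j, w j * z j) * hm
  nlinarith [mul_pos hW hspread]

section Gibbs

variable {ι : Type*} [Fintype ι] (z : ι → ℝ)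

noncomputable def gibbsMoment (k : ℕ) (β : ℝ) : ℝ := ∑ j, exp (β * z j) * z j ^ k

/-- The entropy of the Gibbs distribution `exp (β * z j) / gibbsMoment z 0 β`. -/
noncomputable def gibbsEntropy (β : ℝ) : ℝ :=
  log (gibbsMoment z 0 β) - β * (gibbsMoment z 1 β / gibbsMoment z 0 β)

lemma gibbsMoment_zero_pos [Nonempty ι] (β : ℝ) : 0 < gibbsMoment z 0 β :=
  sum_pos (fun j _ ↦ by simpa using exp_pos (β * z j)) univ_nonempty

lemma hasDerivAt_gibbsMoment (k : ℕ) (β : ℝ) :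
    HasDerivAt (gibbsMoment z k) (gibbsMoment z (k + 1) β) β :=
  HasDerivAt.fun_sum fun j _ ↦
    ((((hasDerivAt_id β).mul_const (z j)).exp).mul_const (z j ^ k)).congr_deriv
      (by simp only [id_eq]; ring)

lemma gibbsMoment_one_sq_lt (hz : ¬ ∃ c, ∀ i, z i = c) (β : ℝ) :
    gibbsMoment z 1 β ^ 2 < gibbsMoment z 0 β * gibbsMoment z 2 β := by
  simpa [gibbsMoment] using
    sq_sum_mul_lt_sum_mul_sum_mul_sq (w := fun j ↦ exp (β * z j)) (fun j ↦ exp_pos _) hz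

lemma hasDerivAt_gibbsEntropy [Nonempty ι] (β : ℝ) :
    HasDerivAt (gibbsEntropy z)
      (-β * ((gibbsMoment z 0 β * gibbsMoment z 2 β - gibbsMoment z 1 β ^ 2)
        / gibbsMoment z 0 β ^ 2)) β := by
  have hZ := (gibbsMoment_zero_pos z β).ne'
  have hlog := (hasDerivAt_gibbsMoment z 0 β).log hZ
  have hmean := (hasDerivAt_gibbsMoment z 1 β).div (hasDerivAt_gibbsMoment z 0 β) hZ
  refine (hlog.sub ((hasDerivAt_id β).mul hmean)).congr_deriv ?_
  simp only [zero_add, Nat.reduceAdd, id_eq, Pi.div_apply]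
  ring

lemma strictAntiOn_gibbsEntropy (hz : ¬ ∃ c, ∀ i, z i = c) :
    StrictAntiOn (gibbsEntropy z) (Set.Ioi 0) := by
  have := nonempty_of_not_exists_forall_eq hz
  refine strictAntiOn_of_hasDerivWithinAt_neg (convex_Ioi 0)
    (fun β _ ↦ (hasDerivAt_gibbsEntropy z β).continuousAt.continuousWithinAt)
    (fun β _ ↦ (hasDerivAt_gibbsEntropy z β).hasDerivWithinAt) fun β hβ ↦ ?_
  rw [interior_Ioi, Set.mem_Ioi] at hβ
  have hvar := sub_pos.mpr (gibbsMoment_one_sq_lt z hz β)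
  have := gibbsMoment_zero_pos z β
  have : 0 < β * ((gibbsMoment z 0 β * gibbsMoment z 2 β - gibbsMoment z 1 β ^ 2)
      / gibbsMoment z 0 β ^ 2) := by positivity
  linarith

end Gibbs

lemma entropy_softmax {C : ℕ} (z : Fin C → ℝ) (T : ℝ) :
    entropy (softmax z T) = gibbsEntropy z T⁻¹ := by
  rcases isEmpty_or_nonempty (Fin C) with hC | hC
  · simp [entropy, gibbsEntropy, gibbsMoment]
  have hZ := (gibbsMoment_zero_pos z T⁻¹).ne'
  set Z := gibbsMoment z 0 T⁻¹ with hZdef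
  have hsoftmax : softmax z T = fun i ↦ exp (T⁻¹ * z i) / Z := by
    ext i
    simp only [softmax, hZdef, gibbsMoment, pow_zero, mul_one, div_eq_inv_mul]
  have hlog (i : Fin C) : log (exp (T⁻¹ * z i) / Z) = T⁻¹ * z i - log Z := by
    rw [log_div (exp_ne_zero _) hZ, log_exp]
  have hsum : ∑ i, exp (T⁻¹ * z i) / Z * (T⁻¹ * z i - log Z)
      = (T⁻¹ * gibbsMoment z 1 T⁻¹ - log Z * gibbsMoment z 0 T⁻¹) / Z := by
    simp only [gibbsMoment, mul_sum, ← sum_sub_distrib, sum_div]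
    exact sum_congr rfl fun i _ ↦ by ring
  rw [entropy, gibbsEntropy, hsoftmax]
  simp only [hlog, hsum, ← hZdef, sub_div, mul_div_cancel_right₀ _ hZ]
  ring

theorem stmt_5 {C : ℕ} (z : Fin C → ℝ) (hne : ¬ ∃ c : ℝ, ∀ i, z i = c) :
    StrictMonoOn (fun T => entropy (softmax z T)) (Set.Ioi (0 : ℝ)) := by
  simp only [entropy_softmax]
  exact (strictAntiOn_gibbsEntropy z hne).comp inv_strictAntiOn
    fun _ hT ↦ Set.mem_Ioi.mpr (inv_pos.mpr hT)
end

section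
/- Let $\mathbf{z}\in\mathbb{R}^C$ with $z_1 \geq \dots \geq z_C$, $\Delta z = z_1 - z_2$, $T > 1$, and $M \in \{1,\dots,C-1\}$. If $\Delta z > \max\left\{\frac{T}{T-1}\ln(4T), \frac{T}{T+1}\ln(4T(C-1)^2)\right\}$, then $\frac{\partial}{\partial z_1} g(\mathbf{z};T,M) < 0$, where $g(\mathbf{z};T,M) = \frac{\sum_{i=1}^M e^{z_i}}{\sum_{j=1}^C e^{z_j}} - \frac{\sum_{i=1}^M e^{z_i/T}}{\sum_{j=1}^C e^{z_j/T}}$. -/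
/-!
Only the largest logit `z₀` (the paper's `z₁`) moves. The derivatives of the two top-`M` masses
are `p₀ (1 - P)` and `p₀ᵀ (1 - Pᵀ) / T`, where `1 - P` is the mass of the classes outside the
top `M`, so it suffices to compare them class by class. For such a class `j`,
`e^{z₀} e^{zⱼ} / S² ≤ e^{-(z₀ - zⱼ)}`, while the tempered partition function is at most
`e^{z₀/T} (1 + u)` with `u = (C - 1) e^{-Δz/T}`; the comparison then reduces to
`T (1 + u)² < e^{Δz (T-1)/T}`. This follows from the first lower bound on `Δz` when `u ≤ 1`
(as `(1 + u)² ≤ 4`) and from the second when `u > 1` (as `(1 + u)² < 4u²`).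
-/

noncomputable def gap {C : ℕ} (z : Fin C → ℝ) (T : ℝ) (M : ℕ) : ℝ :=
  (∑ i ∈ Finset.univ.filter (fun i : Fin C => (i : ℕ) < M), Real.exp (z i)) /
      (∑ j, Real.exp (z j)) -
    (∑ i ∈ Finset.univ.filter (fun i : Fin C => (i : ℕ) < M), Real.exp (z i / T)) /
      (∑ j, Real.exp (z j / T))

open Finset Real

noncomputable def softmaxMass {ι : Type*} [Fintype ι] (s : Finset ι) (τ : ℝ) (z : ι → ℝ) :
    ℝ :=
  (∑ i ∈ s, exp (z i / τ)) / ∑ j, exp (z j / τ)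

theorem gap_eq_softmaxMass_sub {C : ℕ} (z : Fin C → ℝ) (T : ℝ) (M : ℕ) :
    gap z T M = softmaxMass (univ.filter fun i : Fin C => (i : ℕ) < M) 1 z -
      softmaxMass (univ.filter fun i : Fin C => (i : ℕ) < M) T z := by
  simp only [gap, softmaxMass, div_one]

theorem HasDerivAt.add_const_div_add_const {f : ℝ → ℝ} {f' x : ℝ} (hf : HasDerivAt f f' x)
    (a : ℝ) {b : ℝ} (hb : f x + b ≠ 0) :
    HasDerivAt (fun y => (f y + a) / (f y + b)) (f' * (b - a) / (f x + b) ^ 2) x :=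
  ((hf.add_const a).div (hf.add_const b) hb).congr_deriv (by ring)

theorem Finset.sum_comp_update_of_mem {ι α β : Type*} [DecidableEq ι] [AddCommMonoid β]
    {s : Finset ι} {i : ι} (hi : i ∈ s) (f : α → β) (z : ι → α) (x : α) :
    ∑ j ∈ s, f (Function.update z i x j) = f x + ∑ j ∈ s.erase i, f (z j) := by
  rw [← add_sum_erase _ _ hi, Function.update_self]
  congr 1
  exact sum_congr rfl fun j hj => by rw [Function.update_of_ne (ne_of_mem_erase hj)]

theorem hasDerivAt_softmaxMass_update {ι : Type*} [Fintype ι] [DecidableEq ι] {s : Finset ι}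
    {i : ι} (hi : i ∈ s) (z : ι → ℝ) (τ : ℝ) :
    HasDerivAt (fun x => softmaxMass s τ (Function.update z i x))
      (exp (z i / τ) / τ * (∑ j ∈ sᶜ, exp (z j / τ)) / (∑ j, exp (z j / τ)) ^ 2) (z i) := by
  set a := ∑ j ∈ s.erase i, exp (z j / τ)
  set b := ∑ j ∈ univ.erase i, exp (z j / τ)
  have hmass : (fun x => softmaxMass s τ (Function.update z i x)) =
      fun x => (exp (x / τ) + a) / (exp (x / τ) + b) := by
    funext x
    simp only [softmaxMass, sum_comp_update_of_mem hi (fun y => exp (y / τ)),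
      sum_comp_update_of_mem (mem_univ i) (fun y => exp (y / τ)), a, b]
  have hb : 0 ≤ b := sum_nonneg fun j _ => (exp_pos _).le
  have htotal : exp (z i / τ) + b = ∑ j, exp (z j / τ) :=
    add_sum_erase _ (fun j => exp (z j / τ)) (mem_univ i)
  have hcompl : b - a = ∑ j ∈ sᶜ, exp (z j / τ) := by
    have hs : exp (z i / τ) + a = ∑ j ∈ s, exp (z j / τ) :=
      add_sum_erase s (fun j => exp (z j / τ)) hi
    linarith [sum_add_sum_compl s fun j => exp (z j / τ)]
  have hexp : HasDerivAt (fun x => exp (x / τ)) (exp (z i / τ) * (1 / τ)) (z i) :=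
    ((hasDerivAt_id (z i)).div_const τ).exp
  rw [hmass]
  convert hexp.add_const_div_add_const a (add_pos_of_pos_of_nonneg (exp_pos _) hb).ne' using 1
  rw [htotal, hcompl]
  ring

theorem sum_le_add_mul_of_forall_ne_le {ι : Type*} [Fintype ι] [DecidableEq ι] (f : ι → ℝ)
    (i : ι) {m : ℝ} (hm : ∀ j ≠ i, f j ≤ m) :
    ∑ j, f j ≤ f i + ((Fintype.card ι : ℝ) - 1) * m := by
  rw [← add_sum_erase _ _ (mem_univ i)]
  have hcard : ((univ.erase i).card : ℝ) = (Fintype.card ι : ℝ) - 1 := by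
    rw [card_erase_of_mem (mem_univ i), card_univ, Nat.cast_sub (Fintype.card_pos_iff.mpr ⟨i⟩),
      Nat.cast_one]
  have := sum_le_card_nsmul (univ.erase i) f m fun j hj => hm j (ne_of_mem_erase hj)
  rw [nsmul_eq_mul, hcard] at this
  linarith

theorem sum_exp_div_le_of_forall_ne_le {ι : Type*} [Fintype ι] [DecidableEq ι] {z : ι → ℝ}
    {i : ι} {τ Δ : ℝ} (hτ : 0 ≤ τ) (hz : ∀ j ≠ i, z j ≤ z i - Δ) :
    ∑ j, exp (z j / τ) ≤ exp (z i / τ) * (1 + ((Fintype.card ι : ℝ) - 1) * exp (-Δ / τ)) :=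
  calc ∑ j, exp (z j / τ) ≤ exp (z i / τ) + ((Fintype.card ι : ℝ) - 1) * exp ((z i - Δ) / τ) :=
        sum_le_add_mul_of_forall_ne_le _ i fun j hj =>
          exp_le_exp.mpr (div_le_div_of_nonneg_right (hz j hj) hτ)
    _ = exp (z i / τ) * (1 + ((Fintype.card ι : ℝ) - 1) * exp (-Δ / τ)) := by
      rw [sub_div, exp_sub, neg_div, exp_neg]
      field_simp

theorem lt_exp_of_div_mul_log_lt {a b x Δ : ℝ} (ha : 0 < a) (hb : 0 < b) (hx : 0 < x)
    (h : a / b * log x < Δ) : x < exp (Δ * b / a) := by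
  rw [← log_lt_iff_lt_exp hx, lt_div_iff₀ ha]
  rwa [div_mul_eq_mul_div, div_lt_iff₀ hb, mul_comm] at h

theorem mul_one_add_mul_exp_sq_lt_exp {T n Δ : ℝ} (hT : 1 < T) (hn : 0 ≤ n)
    (hΔ : max (T / (T - 1) * log (4 * T)) (T / (T + 1) * log (4 * T * n ^ 2)) < Δ) :
    T * (1 + n * exp (-Δ / T)) ^ 2 < exp (Δ * (T - 1) / T) := by
  set u := n * exp (-Δ / T)
  have hu : 0 ≤ u := by positivity
  rcases le_or_gt u 1 with hu1 | hu1
  · have h4T := lt_exp_of_div_mul_log_lt (by linarith) (by linarith) (by linarith)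
      ((le_max_left _ _).trans_lt hΔ)
    have hsq : (1 + u) ^ 2 ≤ 4 := by nlinarith
    nlinarith
  · have hn0 : 0 < n := by
      by_contra! hn0
      linarith [show u = 0 by simp [u, le_antisymm hn0 hn]]
    have h4Tn := lt_exp_of_div_mul_log_lt (by linarith) (by linarith) (by positivity)
      ((le_max_right _ _).trans_lt hΔ)
    have hu2 : u ^ 2 = n ^ 2 * exp (-2 * Δ / T) := by
      rw [mul_pow, ← exp_nat_mul]
      ring_nf
    have hsq : (1 + u) ^ 2 ≤ 4 * u ^ 2 := by nlinarith
    calc T * (1 + u) ^ 2 ≤ 4 * T * n ^ 2 * exp (-2 * Δ / T) := by nlinarith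
      _ < exp (Δ * (T + 1) / T) * exp (-2 * Δ / T) := by gcongr
      _ = exp (Δ * (T - 1) / T) := by
        rw [← exp_add]
        ring_nf

section Comparison

variable {T Δ u x S ST : ℝ}

theorem exp_mul_exp_div_sq_lt (hT : 1 < T) {y : ℝ} (hy : y ≤ x - Δ) (hS : exp x ≤ S)
    (hST0 : 0 < ST) (hST : ST ≤ exp (x / T) * (1 + u))
    (hkey : T * (1 + u) ^ 2 < exp (Δ * (T - 1) / T)) :
    exp x * exp y / S ^ 2 < exp (x / T) / T * exp (y / T) / ST ^ 2 := by
  have hT0 : 0 < T := by linarith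
  have hE : T * (1 + u) ^ 2 < exp ((x - y) * (T - 1) / T) :=
    hkey.trans_le (exp_le_exp.mpr (by gcongr; linarith))
  have hu : 0 < 1 + u := pos_of_mul_pos_right (hST0.trans_le hST) (exp_pos _).le
  -- both sides equal `e^{y - x}`
  have hexp : exp x * exp y / exp x ^ 2 =
      exp (x / T) * exp (y / T) / (exp (x / T) ^ 2 * exp ((x - y) * (T - 1) / T)) := by
    rw [div_eq_div_iff (by positivity) (by positivity)]
    simp only [sq, ← exp_add]
    congr 1
    field_simp
    ring
  calc exp x * exp y / S ^ 2 ≤ exp x * exp y / exp x ^ 2 := by gcongr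
    _ = exp (x / T) * exp (y / T) / (exp (x / T) ^ 2 * exp ((x - y) * (T - 1) / T)) := hexp
    _ < exp (x / T) * exp (y / T) / (exp (x / T) ^ 2 * (T * (1 + u) ^ 2)) := by gcongr
    _ = exp (x / T) * exp (y / T) / (T * (exp (x / T) * (1 + u)) ^ 2) := by ring
    _ ≤ exp (x / T) * exp (y / T) / (T * ST ^ 2) := by gcongr
    _ = exp (x / T) / T * exp (y / T) / ST ^ 2 := by field_simp

theorem exp_mul_sum_exp_div_sq_lt {ι : Type*} {K : Finset ι} (hK : K.Nonempty) (y : ι → ℝ)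
    (hT : 1 < T) (hy : ∀ j ∈ K, y j ≤ x - Δ) (hS : exp x ≤ S) (hST0 : 0 < ST)
    (hST : ST ≤ exp (x / T) * (1 + u)) (hkey : T * (1 + u) ^ 2 < exp (Δ * (T - 1) / T)) :
    exp x * (∑ j ∈ K, exp (y j)) / S ^ 2 <
      exp (x / T) / T * (∑ j ∈ K, exp (y j / T)) / ST ^ 2 := by
  simp only [mul_sum, sum_div]
  exact sum_lt_sum_of_nonempty hK fun j hj =>
    exp_mul_exp_div_sq_lt hT (hy j hj) hS hST0 hST hkey

end Comparison

theorem stmt_9 {C : ℕ} (hC : 2 ≤ C) (z : Fin C → ℝ)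
    (hz : ∀ i j : Fin C, i ≤ j → z j ≤ z i)
    (T : ℝ) (hT : 1 < T) (M : ℕ) (hM1 : 1 ≤ M) (hM : M ≤ C - 1)
    (hΔ : z ⟨0, by omega⟩ - z ⟨1, by omega⟩ >
      max (T / (T - 1) * Real.log (4 * T))
        (T / (T + 1) * Real.log (4 * T * ((C : ℝ) - 1) ^ 2))) :
    deriv (fun x => gap (Function.update z ⟨0, by omega⟩ x) T M) (z ⟨0, by omega⟩) < 0 := by
  set i₀ : Fin C := ⟨0, by omega⟩
  set i₁ : Fin C := ⟨1, by omega⟩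
  set Δ := z i₀ - z i₁
  set top := univ.filter fun i : Fin C => (i : ℕ) < M
  have hi₀ : i₀ ∈ top := by simp only [top, i₀, mem_filter, mem_univ, true_and]; omega
  have hC' : (0 : ℝ) ≤ C - 1 := by
    rw [sub_nonneg, Nat.one_le_cast]
    omega
  have hrest : ∀ j ≠ i₀, z j ≤ z i₀ - Δ := fun j hj => by
    rw [sub_sub_cancel]
    exact hz i₁ j (Fin.le_def.mpr (Nat.one_le_iff_ne_zero.mpr (Fin.val_ne_of_ne hj)))
  have hderiv := (hasDerivAt_softmaxMass_update hi₀ z 1).fun_sub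
    (hasDerivAt_softmaxMass_update hi₀ z T)
  simp only [div_one] at hderiv
  simp only [gap_eq_softmaxMass_sub]
  rw [hderiv.deriv, sub_neg]
  have hST := sum_exp_div_le_of_forall_ne_le (by linarith : (0 : ℝ) ≤ T) hrest
  rw [Fintype.card_fin] at hST
  exact exp_mul_sum_exp_div_sq_lt ⟨⟨M, by omega⟩, by simp [top]⟩ z hT
    (fun j hj => hrest j fun h => mem_compl.mp hj (h ▸ hi₀))
    (single_le_sum (fun j _ => (exp_pos _).le) (mem_univ i₀))
    (sum_pos (fun j _ => exp_pos _) ⟨i₀, mem_univ _⟩) hST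
    (mul_one_add_mul_exp_sq_lt_exp hT hC' hΔ)
end

section
/- Let $\mathbf{z}\in\mathbb{R}^C$ be sorted descendingly, $T > 1$, and define $d(\mathbf{z};T,i) = \frac{e^{z_i}}{\sum_j e^{z_j}} - \frac{e^{z_i/T}}{\sum_j e^{z_j/T}}$. If there exists $i$ with $d(\mathbf{z};T,i) < 0$, then $d(\mathbf{z};T,k) < 0$ for every $k > i$. -/
noncomputable def dfun {C : ℕ} (z : Fin C → ℝ) (T : ℝ) (i : Fin C) : ℝ :=
  Real.exp (z i) / (∑ j, Real.exp (z j)) - Real.exp (z i / T) / (∑ j, Real.exp (z j / T))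

/-!
`dfun z T k < 0` exactly when `exp (z k * (1 - 1 / T))` lies below `Σ exp (z j) / Σ exp (z j / T)`.
The threshold does not depend on `k`, and for `T ≥ 1` the left side is monotone in `z k`.
-/

open Real

lemma sum_exp_pos {C : ℕ} (z : Fin C → ℝ) (k : Fin C) : 0 < ∑ j, exp (z j) :=
  Finset.sum_pos (fun j _ => exp_pos (z j)) ⟨k, Finset.mem_univ k⟩

lemma dfun_neg_iff {C : ℕ} (z : Fin C → ℝ) (T : ℝ) (k : Fin C) :
    dfun z T k < 0 ↔
      exp (z k - z k / T) < (∑ j, exp (z j)) / ∑ j, exp (z j / T) := by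
  have hS := sum_exp_pos z k
  have hST := sum_exp_pos (fun j => z j / T) k
  rw [dfun, sub_neg, exp_sub, div_lt_div_iff₀ hS hST, div_lt_div_iff₀ (exp_pos _) hST,
    mul_comm (exp (z k / T))]

lemma dfun_neg_of_le {C : ℕ} {z : Fin C → ℝ} {T : ℝ} (hT : 1 ≤ T) {i k : Fin C}
    (hzk : z k ≤ z i) (hi : dfun z T i < 0) : dfun z T k < 0 := by
  rw [dfun_neg_iff] at hi ⊢
  refine lt_of_le_of_lt (exp_le_exp.2 ?_) hi
  have hT' : 0 ≤ 1 - 1 / T := sub_nonneg.2 ((div_le_one (by linarith)).2 hT)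
  calc z k - z k / T = z k * (1 - 1 / T) := by ring
    _ ≤ z i * (1 - 1 / T) := mul_le_mul_of_nonneg_right hzk hT'
    _ = z i - z i / T := by ring

theorem stmt_12 {C : ℕ} (z : Fin C → ℝ) (hz : ∀ i j : Fin C, i ≤ j → z j ≤ z i)
    (T : ℝ) (hT : 1 < T) (i : Fin C) (hi : dfun z T i < 0) :
    ∀ k : Fin C, i < k → dfun z T k < 0 :=
  fun k hk => dfun_neg_of_le hT.le (hz i k hk.le) hi
end

section
/- Let $\mathbf{z}\in\mathbb{R}^C$ be sorted descendingly, $0 < T < 1$, and $d(\mathbf{z};T,i) = \frac{e^{z_i}}{\sum_j e^{z_j}} - \frac{e^{z_i/T}}{\sum_j e^{z_j/T}}$. If there exists $i$ with $d(\mathbf{z};T,i) > 0$, then $d(\mathbf{z};T,k) > 0$ for every $k > i$. -/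
open Real

lemma dfun_pos_iff {C : ℕ} (z : Fin C → ℝ) (T : ℝ) (k : Fin C) :
    0 < dfun z T k ↔ exp (z k / T - z k) * ∑ j, exp (z j) < ∑ j, exp (z j / T) := by
  have sum_pos (f : Fin C → ℝ) : 0 < ∑ j, exp (f j) :=
    Finset.sum_pos (fun j _ => exp_pos _) ⟨k, Finset.mem_univ k⟩
  rw [dfun, sub_pos, div_lt_div_iff₀ (sum_pos _) (sum_pos _), exp_sub, div_mul_eq_mul_div,
    div_lt_iff₀ (exp_pos _), mul_comm (exp (z k))]

lemma div_sub_self_le_div_sub_self {T a b : ℝ} (hT0 : 0 < T) (hT1 : T ≤ 1) (hab : a ≤ b) :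
    a / T - a ≤ b / T - b := by
  have h : b - a ≤ (b - a) / T := le_div_self (sub_nonneg.mpr hab) hT0 hT1
  rw [sub_div] at h
  linarith

theorem stmt_13 {C : ℕ} (z : Fin C → ℝ) (hz : ∀ i j : Fin C, i ≤ j → z j ≤ z i)
    (T : ℝ) (hT0 : 0 < T) (hT1 : T < 1) (i : Fin C) (hi : dfun z T i > 0) :
    ∀ k : Fin C, i < k → dfun z T k > 0 := by
  intro k hk
  refine (dfun_pos_iff z T k).mpr ?_
  calc exp (z k / T - z k) * ∑ j, exp (z j)
      ≤ exp (z i / T - z i) * ∑ j, exp (z j) := by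
        gcongr exp ?_ * _
        exact div_sub_self_le_div_sub_self hT0 hT1.le (hz i k hk.le)
    _ < ∑ j, exp (z j / T) := (dfun_pos_iff z T i).mp hi
end

section
/- Let $\mathbf{z}\in\mathbb{R}^C$ be sorted descendingly, $T > 1$, and $\Delta z = z_1 - z_2$. If the first coordinate is the only one whose softmax value decreases under temperature scaling (i.e., $d(\mathbf{z};T,1) > 0$ and $d(\mathbf{z};T,i) \leq 0$ for all $i \geq 2$, where $d(\mathbf{z};T,i) = \frac{e^{z_i}}{\sum_j e^{z_j}} - \frac{e^{z_i/T}}{\sum_j e^{z_j/T}}$), then for all $M, L \in \{1,\dots,C\}$: $|g(\mathbf{z};T,M) - g(\mathbf{z};T,L)| < \frac{(C-1)e^{-\Delta z/T}}{(C-1)e^{-\Delta z/T}+1}$, where $g(\mathbf{z};T,M) = \sum_{i=1}^M d(\mathbf{z};T,i)$. -/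
noncomputable def gsum {C : ℕ} (z : Fin C → ℝ) (T : ℝ) (M : ℕ) : ℝ :=
  ∑ i ∈ Finset.univ.filter (fun i : Fin C => (i : ℕ) < M), dfun z T i

open Finset Real

section SumWithOneNonnegTerm

variable {ι : Type*} {f : ι → ℝ} {i₀ : ι} {s : Finset ι}

lemma Finset.sum_nonneg_of_sum_univ_eq_zero [Fintype ι] (hf : ∑ i, f i = 0) (hneg : ∀ i ≠ i₀, f i ≤ 0)
    (hs : i₀ ∈ s) : 0 ≤ ∑ i ∈ s, f i :=
  hf ▸ sum_le_sum_of_subset_of_nonpos' (subset_univ s)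
    fun i _ his => hneg i fun h => his (h ▸ hs)

lemma Finset.sum_le_of_nonpos_of_ne (hneg : ∀ i ≠ i₀, f i ≤ 0) (hs : i₀ ∈ s) :
    ∑ i ∈ s, f i ≤ f i₀ := by
  simpa using sum_le_sum_of_subset_of_nonpos' (singleton_subset_iff.mpr hs)
    fun i _ hi => hneg i (by simpa using hi)

end SumWithOneNonnegTerm

section Softmax

variable {ι : Type*} [Fintype ι]

lemma sum_exp_div_sum_exp [Nonempty ι] (x : ι → ℝ) :
    ∑ i, exp (x i) / ∑ j, exp (x j) = 1 := by
  rw [← sum_div, div_self (sum_pos (fun j _ => exp_pos (x j)) univ_nonempty).ne']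

lemma exp_div_sum_exp_lt_one (x : ι → ℝ) {i j : ι} (hij : j ≠ i) :
    exp (x i) / ∑ k, exp (x k) < 1 := by
  have hlt : exp (x i) < ∑ k, exp (x k) :=
    single_lt_sum hij (mem_univ i) (mem_univ j) (exp_pos _) fun k _ _ => (exp_pos _).le
  exact (div_lt_one ((exp_pos _).trans hlt)).mpr hlt

lemma one_div_le_exp_div_sum_exp [DecidableEq ι] (x : ι → ℝ) {i₀ i₁ : ι}
    (hx : ∀ i ≠ i₀, x i ≤ x i₁) :
    1 / (((Fintype.card ι : ℝ) - 1) * exp (x i₁ - x i₀) + 1) ≤ exp (x i₀) / ∑ k, exp (x k) := by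
  have hcard : ((#(univ.erase i₀) : ℕ) : ℝ) = (Fintype.card ι : ℝ) - 1 := by
    rw [card_erase_of_mem (mem_univ i₀), card_univ,
      Nat.cast_sub (Fintype.card_pos_iff.mpr ⟨i₀⟩), Nat.cast_one]
  have hrest : ∑ i ∈ univ.erase i₀, exp (x i) ≤ ((Fintype.card ι : ℝ) - 1) * exp (x i₁) := by
    rw [← hcard, ← nsmul_eq_mul]
    exact sum_le_card_nsmul _ _ _ fun i hi => exp_le_exp.mpr (hx i (ne_of_mem_erase hi))
  have hsplit := add_sum_erase univ (fun i => exp (x i)) (mem_univ i₀)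
  have hK : 0 ≤ (Fintype.card ι : ℝ) - 1 := hcard ▸ Nat.cast_nonneg _
  rw [div_le_div_iff₀ (by positivity) (hsplit ▸ by positivity), one_mul, mul_add, mul_one,
    mul_left_comm, ← exp_add, add_sub_cancel]
  linarith

end Softmax

section TemperatureGap

variable {C : ℕ} (z : Fin C → ℝ) (T : ℝ)

lemma sum_dfun_eq_zero : ∑ i, dfun z T i = 0 := by
  rcases isEmpty_or_nonempty (Fin C) with hC | hC
  · simp
  · simp only [dfun, sum_sub_distrib, sum_exp_div_sum_exp, sub_self]

variable {z T}

lemma gsum_nonneg (hC : 0 < C) (h2 : ∀ i : Fin C, 1 ≤ (i : ℕ) → dfun z T i ≤ 0) {M : ℕ}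
    (hM : 1 ≤ M) : 0 ≤ gsum z T M :=
  sum_nonneg_of_sum_univ_eq_zero (i₀ := ⟨0, hC⟩) (sum_dfun_eq_zero z T)
    (fun i hi => h2 i (Nat.one_le_iff_ne_zero.mpr (Fin.val_ne_iff.mpr hi)))
    (by simp only [mem_filter, mem_univ, true_and]; omega)

lemma gsum_le_dfun_zero (hC : 0 < C) (h2 : ∀ i : Fin C, 1 ≤ (i : ℕ) → dfun z T i ≤ 0) {M : ℕ}
    (hM : 1 ≤ M) : gsum z T M ≤ dfun z T ⟨0, hC⟩ :=
  sum_le_of_nonpos_of_ne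
    (fun i hi => h2 i (Nat.one_le_iff_ne_zero.mpr (Fin.val_ne_iff.mpr hi)))
    (by simp only [mem_filter, mem_univ, true_and]; omega)

lemma dfun_zero_lt (hC : 2 ≤ C) (hz : Antitone z) (hT : 0 ≤ T) :
    dfun z T ⟨0, hC.trans_lt' two_pos⟩ <
      ((C : ℝ) - 1) * exp (-(z ⟨0, hC.trans_lt' two_pos⟩ - z ⟨1, hC⟩) / T) /
        (((C : ℝ) - 1) * exp (-(z ⟨0, hC.trans_lt' two_pos⟩ - z ⟨1, hC⟩) / T) + 1) := by
  set i₀ : Fin C := ⟨0, hC.trans_lt' two_pos⟩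
  set i₁ : Fin C := ⟨1, hC⟩
  have hK : 0 ≤ (C : ℝ) - 1 := by
    rw [sub_nonneg, Nat.one_le_cast]
    omega
  have hfirst := exp_div_sum_exp_lt_one z (i := i₀) (j := i₁) (by simp [i₀, i₁, Fin.ext_iff])
  have htempered := one_div_le_exp_div_sum_exp (fun i => z i / T) (i₀ := i₀) (i₁ := i₁)
    fun i hi => div_le_div_of_nonneg_right
      (hz (Fin.mk_le_of_le_val (Nat.one_le_iff_ne_zero.mpr (Fin.val_ne_iff.mpr hi)))) hT
  rw [Fintype.card_fin, show z i₁ / T - z i₀ / T = -(z i₀ - z i₁) / T by ring] at htempered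
  have hgap : ((C : ℝ) - 1) * exp (-(z i₀ - z i₁) / T) /
      (((C : ℝ) - 1) * exp (-(z i₀ - z i₁) / T) + 1) =
        1 - 1 / (((C : ℝ) - 1) * exp (-(z i₀ - z i₁) / T) + 1) := by
    field_simp
    ring
  rw [dfun, hgap]
  linarith

end TemperatureGap

theorem stmt_15 {C : ℕ} (hC : 2 ≤ C) (z : Fin C → ℝ)
    (hz : ∀ i j : Fin C, i ≤ j → z j ≤ z i)
    (T : ℝ) (hT : 1 < T)
    (h2 : ∀ i : Fin C, 1 ≤ (i : ℕ) → dfun z T i ≤ 0) :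
    ∀ M L : ℕ, 1 ≤ M → M ≤ C → 1 ≤ L → L ≤ C →
      |gsum z T M - gsum z T L| <
        ((C : ℝ) - 1) * Real.exp (-(z ⟨0, by omega⟩ - z ⟨1, by omega⟩) / T) /
          (((C : ℝ) - 1) * Real.exp (-(z ⟨0, by omega⟩ - z ⟨1, by omega⟩) / T) + 1) := by
  intro M L hM _ hL _
  have hC₀ : 0 < C := by omega
  calc |gsum z T M - gsum z T L| ≤ dfun z T ⟨0, hC₀⟩ := by
        simpa using abs_sub_le_of_le_of_le (gsum_nonneg hC₀ h2 hM) (gsum_le_dfun_zero hC₀ h2 hM)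
          (gsum_nonneg hC₀ h2 hL) (gsum_le_dfun_zero hC₀ h2 hL)
    _ < _ := dfun_zero_lt hC hz (by linarith)
end
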